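/- Let P₁,…,P₄ ∈ ℝ², let J be the Jacobian determinant of the associated bilinear map, and let c₁, c₂, c₄ be the corner cross products. The vertex mode ψ̂_{0,0}(x̂,ŷ) = ( (ŷ−1)²(1+ŷ)(x̂−1)·((c₁+2c₂)x̂ + 3c₁+2c₂)/128 , −(1+x̂)(ŷ−1)(x̂−1)²·((c₁+2c₄)ŷ + 3c₁+2c₄)/128 ) satisfies: (i) its second component vanishes whenever x̂ = ±1 and its first component vanishes whenever ŷ = ±1 (vanishing tangential trace on all four edges of [−1,1]²); (ii) ∇×ψ̂_{0,0}(−1,ŷ) = J(−1,ŷ)·(1−ŷ)/2 for all ŷ; (iii) ∇×ψ̂_{0,0}(x̂,−1) = J(x̂,−1)·(1−x̂)/2 for all x̂; (iv) ∇×ψ̂_{0,0}(1,ŷ) = 0 for all ŷ and ∇×ψ̂_{0,0}(x̂,1) = 0 for all x̂. -/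

import Mathlib

/-! Both components of `ψ̂_{0,0}` separate as `ψ̂₁ = p(x̂) b(ŷ)` and `ψ̂₂ = q(ŷ) b(x̂)` with the
bubble `b(t) = (t - 1)²(1 + t)`. Since `b(±1) = 0` the tangential traces vanish, and
`∇×ψ̂ = q(ŷ) b'(x̂) - p(x̂) b'(ŷ)` with `b'(1) = 0`, `p(1) = q(1) = 0`. On the edges `x̂ = -1` and
`ŷ = -1` the Jacobian interpolates linearly between two corner cross products, so the remaining
identities are polynomial identities in `c₁, c₂, c₄`. -/

/-- Entry `B₁₁` of the Jacobian matrix of the bilinear map: `(x₂₁(1−ŷ) + x₃₄(1+ŷ))/4`. -/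
noncomputable def B11 (x1 x2 x3 x4 yh : ℝ) : ℝ :=
  ((x2 - x1) * (1 - yh) + (x3 - x4) * (1 + yh)) / 4

/-- Entry `B₁₂`: `(x₄₁(1−x̂) + x₃₂(1+x̂))/4`. -/
noncomputable def B12 (x1 x2 x3 x4 xh : ℝ) : ℝ :=
  ((x4 - x1) * (1 - xh) + (x3 - x2) * (1 + xh)) / 4

/-- Entry `B₂₁`: `(y₂₁(1−ŷ) + y₃₄(1+ŷ))/4`. -/
noncomputable def B21 (y1 y2 y3 y4 yh : ℝ) : ℝ :=
  ((y2 - y1) * (1 - yh) + (y3 - y4) * (1 + yh)) / 4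

/-- Entry `B₂₂`: `(y₄₁(1−x̂) + y₃₂(1+x̂))/4`. -/
noncomputable def B22 (y1 y2 y3 y4 xh : ℝ) : ℝ :=
  ((y4 - y1) * (1 - xh) + (y3 - y2) * (1 + xh)) / 4

/-- The Jacobian determinant `J(x̂,ŷ) = det B(x̂,ŷ)` of the bilinear map. -/
noncomputable def Jdet (x1 x2 x3 x4 y1 y2 y3 y4 xh yh : ℝ) : ℝ :=
  B11 x1 x2 x3 x4 yh * B22 y1 y2 y3 y4 xh - B12 x1 x2 x3 x4 xh * B21 y1 y2 y3 y4 yh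

/-- Scalar curl of a planar vector field: `∇×u = ∂u₂/∂x̂ − ∂u₁/∂ŷ`. -/
noncomputable def scurl (u : ℝ × ℝ → ℝ × ℝ) (z : ℝ × ℝ) : ℝ :=
  deriv (fun t => (u (t, z.2)).2) z.1 - deriv (fun t => (u (z.1, t)).1) z.2

/-- Vertex mode `ψ̂_{0,0}` (corresponding to vertex `P₁`). -/
noncomputable def psi00 (x1 x2 x3 x4 y1 y2 y3 y4 : ℝ) (z : ℝ × ℝ) : ℝ × ℝ :=
  let c1 := (x2 - x1) * (y4 - y1) - (y2 - y1) * (x4 - x1)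
  let c2 := (x3 - x2) * (y1 - y2) - (y3 - y2) * (x1 - x2)
  let c4 := (x1 - x4) * (y3 - y4) - (y1 - y4) * (x3 - x4)
  ((z.2 - 1) ^ 2 * (1 + z.2) * (z.1 - 1) * ((c1 + 2 * c2) * z.1 + 3 * c1 + 2 * c2) / 128,
   -((1 + z.1) * (z.2 - 1) * (z.1 - 1) ^ 2 * ((c1 + 2 * c4) * z.2 + 3 * c1 + 2 * c4)) / 128)

/-- Vertex mode `ψ̂_{0,1}` (corresponding to vertex `P₂`). -/
noncomputable def psi01 (x1 x2 x3 x4 y1 y2 y3 y4 : ℝ) (z : ℝ × ℝ) : ℝ × ℝ :=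
  let c1 := (x2 - x1) * (y4 - y1) - (y2 - y1) * (x4 - x1)
  let c2 := (x3 - x2) * (y1 - y2) - (y3 - y2) * (x1 - x2)
  let c3 := (x4 - x3) * (y2 - y3) - (y4 - y3) * (x2 - x3)
  ((z.2 - 1) ^ 2 * (1 + z.2) * (z.1 + 1) * ((2 * c1 + c2) * z.1 - (2 * c1 + 3 * c2)) / 128,
   (1 - z.1) * (z.2 - 1) * (1 + z.1) ^ 2 * ((c2 + 2 * c3) * z.2 + 3 * c2 + 2 * c3) / 128)

/-- Vertex mode `ψ̂_{1,1}` (corresponding to vertex `P₃`). -/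
noncomputable def psi11 (x1 x2 x3 x4 y1 y2 y3 y4 : ℝ) (z : ℝ × ℝ) : ℝ × ℝ :=
  let c2 := (x3 - x2) * (y1 - y2) - (y3 - y2) * (x1 - x2)
  let c3 := (x4 - x3) * (y2 - y3) - (y4 - y3) * (x2 - x3)
  let c4 := (x1 - x4) * (y3 - y4) - (y1 - y4) * (x3 - x4)
  ((z.2 + 1) ^ 2 * (1 - z.2) * (z.1 + 1) * (-(2 * c4 + c3) * z.1 + 2 * c4 + 3 * c3) / 128,
   (1 - z.1) * (z.2 + 1) * (z.1 + 1) ^ 2 * ((2 * c2 + c3) * z.2 - (2 * c2 + 3 * c3)) / 128)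

/-- Vertex mode `ψ̂_{1,0}` (corresponding to vertex `P₄`). -/
noncomputable def psi10 (x1 x2 x3 x4 y1 y2 y3 y4 : ℝ) (z : ℝ × ℝ) : ℝ × ℝ :=
  let c1 := (x2 - x1) * (y4 - y1) - (y2 - y1) * (x4 - x1)
  let c3 := (x4 - x3) * (y2 - y3) - (y4 - y3) * (x2 - x3)
  let c4 := (x1 - x4) * (y3 - y4) - (y1 - y4) * (x3 - x4)
  ((z.2 + 1) ^ 2 * (1 - z.2) * (z.1 - 1) * (-(c4 + 2 * c3) * z.1 - (3 * c4 + 2 * c3)) / 128,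
   (1 + z.1) * (z.2 + 1) * (z.1 - 1) ^ 2 * (-(2 * c1 + c4) * z.2 + 2 * c1 + 3 * c4) / 128)

noncomputable def bubble (t : ℝ) : ℝ := (t - 1) ^ 2 * (1 + t)

theorem bubble_one : bubble 1 = 0 := by norm_num [bubble]

theorem bubble_neg_one : bubble (-1) = 0 := by norm_num [bubble]

theorem hasDerivAt_bubble (t : ℝ) : HasDerivAt bubble ((t - 1) * (3 * t + 1)) t :=
  (((hasDerivAt_id' t).sub_const 1).fun_pow 2).fun_mul ((hasDerivAt_id' t).const_add 1)
    |>.congr_deriv (by push_cast; ring)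

theorem scurl_of_separable {u : ℝ × ℝ → ℝ × ℝ} {φ p q : ℝ → ℝ}
    (hu : ∀ x y, u (x, y) = (p x * φ y, q y * φ x)) {a b da db : ℝ}
    (ha : HasDerivAt φ da a) (hb : HasDerivAt φ db b) :
    scurl u (a, b) = q b * da - p a * db := by
  simp only [scurl, hu]
  rw [(ha.const_mul (q b)).deriv, (hb.const_mul (p a)).deriv]

section

variable (x1 x2 x3 x4 y1 y2 y3 y4 : ℝ)

local notation "c₁" => (x2 - x1) * (y4 - y1) - (y2 - y1) * (x4 - x1)
local notation "c₂" => (x3 - x2) * (y1 - y2) - (y3 - y2) * (x1 - x2)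
local notation "c₄" => (x1 - x4) * (y3 - y4) - (y1 - y4) * (x3 - x4)

theorem Jdet_left_edge (yh : ℝ) :
    Jdet x1 x2 x3 x4 y1 y2 y3 y4 (-1) yh = ((1 - yh) * c₁ + (1 + yh) * c₄) / 8 := by
  simp only [Jdet, B11, B12, B21, B22]
  ring

theorem Jdet_bottom_edge (xh : ℝ) :
    Jdet x1 x2 x3 x4 y1 y2 y3 y4 xh (-1) = ((1 - xh) * c₁ + (1 + xh) * c₂) / 8 := by
  simp only [Jdet, B11, B12, B21, B22]
  ring

theorem psi00_eq (xh yh : ℝ) :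
    psi00 x1 x2 x3 x4 y1 y2 y3 y4 (xh, yh) =
      ((xh - 1) * ((c₁ + 2 * c₂) * xh + 3 * c₁ + 2 * c₂) / 128 * bubble yh,
        -((yh - 1) * ((c₁ + 2 * c₄) * yh + 3 * c₁ + 2 * c₄)) / 128 * bubble xh) := by
  simp only [psi00, bubble, Prod.mk.injEq]
  constructor <;> ring

theorem scurl_psi00 (xh yh : ℝ) :
    scurl (psi00 x1 x2 x3 x4 y1 y2 y3 y4) (xh, yh) =
      -((yh - 1) * ((c₁ + 2 * c₄) * yh + 3 * c₁ + 2 * c₄)) / 128 * ((xh - 1) * (3 * xh + 1)) -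
        (xh - 1) * ((c₁ + 2 * c₂) * xh + 3 * c₁ + 2 * c₂) / 128 * ((yh - 1) * (3 * yh + 1)) :=
  scurl_of_separable (psi00_eq x1 x2 x3 x4 y1 y2 y3 y4) (hasDerivAt_bubble xh)
    (hasDerivAt_bubble yh)

end

/-- Trace properties of the vertex mode `ψ̂_{0,0}`:
(i) vanishing tangential trace on all four edges of `[−1,1]²`;
(ii) `∇×ψ̂_{0,0}(−1,ŷ) = J(−1,ŷ)·(1−ŷ)/2`; (iii) `∇×ψ̂_{0,0}(x̂,−1) = J(x̂,−1)·(1−x̂)/2`;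
(iv) `∇×ψ̂_{0,0}(1,ŷ) = 0` and `∇×ψ̂_{0,0}(x̂,1) = 0`. -/
theorem vertex_mode_P1_traces (x1 x2 x3 x4 y1 y2 y3 y4 : ℝ) :
    (∀ yh : ℝ, (psi00 x1 x2 x3 x4 y1 y2 y3 y4 (-1, yh)).2 = 0 ∧
      (psi00 x1 x2 x3 x4 y1 y2 y3 y4 (1, yh)).2 = 0) ∧
    (∀ xh : ℝ, (psi00 x1 x2 x3 x4 y1 y2 y3 y4 (xh, -1)).1 = 0 ∧
      (psi00 x1 x2 x3 x4 y1 y2 y3 y4 (xh, 1)).1 = 0) ∧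
    (∀ yh : ℝ, scurl (psi00 x1 x2 x3 x4 y1 y2 y3 y4) (-1, yh) =
      Jdet x1 x2 x3 x4 y1 y2 y3 y4 (-1) yh * (1 - yh) / 2) ∧
    (∀ xh : ℝ, scurl (psi00 x1 x2 x3 x4 y1 y2 y3 y4) (xh, -1) =
      Jdet x1 x2 x3 x4 y1 y2 y3 y4 xh (-1) * (1 - xh) / 2) ∧
    (∀ yh : ℝ, scurl (psi00 x1 x2 x3 x4 y1 y2 y3 y4) (1, yh) = 0) ∧
    (∀ xh : ℝ, scurl (psi00 x1 x2 x3 x4 y1 y2 y3 y4) (xh, 1) = 0) := by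
  refine ⟨fun yh => ?_, fun xh => ?_, fun yh => ?_, fun xh => ?_, fun yh => ?_, fun xh => ?_⟩
  · simp only [psi00_eq, bubble_one, bubble_neg_one, mul_zero, and_self]
  · simp only [psi00_eq, bubble_one, bubble_neg_one, mul_zero, and_self]
  · rw [scurl_psi00, Jdet_left_edge]
    ring
  · rw [scurl_psi00, Jdet_bottom_edge]
    ring
  · rw [scurl_psi00]
    ring
  · rw [scurl_psi00]
    ring
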